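/- arXiv:2202.04681 — 2 statements merged into one kernel-verified Lean document; each statement's English description precedes it below -/
import Mathlib

section
/- Let f be a polynomial over ℝ, written as f(z) = k(z²) + z·l(z²) with k, l polynomials over ℝ. Let a, b₁, b₂ be pure quaternions with b₁ parallel to a and b₂ perpendicular to a (so b₂ anti-commutes with a). Set η = a + ε b₁ + ε b₂ and α = a + ε b₁ in the dual quaternions. Then f(η) = f(α) + l(α²)·ε b₂. -/
/-!
With α = a + ε b₁ and β = ε b₂ we have β² = 0 and βα = -αβ (the ε b₁ part is killed by ε² = 0, the
rest is b₂ a = -a b₂). Hence (α + β)² = α² and β commutes with α², so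
f(α + β) = k(α²) + (α + β) l(α²) = f(α) + l(α²) β.
-/

open Quaternion DualNumber TrivSqZeroExt Polynomial

section Anticommute
variable {A : Type*} [Ring A] {α β : A}

theorem add_sq_of_mul_eq_neg_mul (hanti : β * α = -(α * β)) (hβ : β * β = 0) :
    (α + β) ^ 2 = α ^ 2 := by
  rw [sq, sq, mul_add, add_mul, add_mul, hβ, hanti]
  abel

theorem commute_sq_of_mul_eq_neg_mul (hanti : β * α = -(α * β)) : Commute (α ^ 2) β := by
  have hanti' : α * β = -(β * α) := by rw [hanti, neg_neg]
  calc α ^ 2 * β = α * (α * β) := by rw [sq, mul_assoc]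
    _ = -(α * β * α) := by rw [mul_assoc, hanti, mul_neg, neg_neg]
    _ = β * α ^ 2 := by rw [hanti', neg_mul, neg_neg, sq, mul_assoc]

end Anticommute

namespace DualNumber
variable {R : Type*} [Ring R]

theorem eps_mul_inl_mul_eps_mul_inl (x y : R) : (ε * inl x : R[ε]) * (ε * inl y) = 0 := by
  ext <;> simp

theorem eps_mul_inl_anticomm {a b c : R} (h : b * a = -(a * b)) :
    (ε * inl b : R[ε]) * (inl a + ε * inl c) = -((inl a + ε * inl c) * (ε * inl b)) := by
  ext <;> simp [h]

end DualNumber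

namespace Polynomial
variable {R A : Type*} [CommSemiring R]

theorem aeval_eq_of_eq_comp_sq_add_X_mul_comp_sq [Semiring A] [Algebra R A] {f k l : R[X]}
    (hf : f = k.comp (X ^ 2) + X * l.comp (X ^ 2)) (x : A) :
    aeval x f = aeval (x ^ 2) k + x * aeval (x ^ 2) l := by
  rw [hf, map_add, map_mul, aeval_X, aeval_comp, aeval_comp, aeval_X_pow]

theorem aeval_add_of_mul_eq_neg_mul [Ring A] [Algebra R A] {f k l : R[X]}
    (hf : f = k.comp (X ^ 2) + X * l.comp (X ^ 2)) {α β : A}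
    (hanti : β * α = -(α * β)) (hβ : β * β = 0) :
    aeval (α + β) f = aeval α f + aeval (α ^ 2) l * β := by
  have hcomm : Commute (aeval (α ^ 2) l) β :=
    (Algebra.commute_of_mem_adjoin_singleton_of_commute (aeval_mem_adjoin_singleton R _)
      (commute_sq_of_mul_eq_neg_mul hanti).symm).symm
  rw [aeval_eq_of_eq_comp_sq_add_X_mul_comp_sq hf, aeval_eq_of_eq_comp_sq_add_X_mul_comp_sq hf,
    add_sq_of_mul_eq_neg_mul hanti hβ, add_mul, hcomm.eq, ← add_assoc]

end Polynomial

theorem stmt_10_general (f k l : ℝ[X])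
    (hf : ∀ z : ℝ, f.eval z = k.eval (z ^ 2) + z * l.eval (z ^ 2))
    (a b₁ b₂ : ℍ[ℝ]) (hperp : b₂ * a = -(a * b₂)) :
    aeval ((inl a : DualNumber ℍ[ℝ]) + eps * inl b₁ + eps * inl b₂) f
      = aeval ((inl a : DualNumber ℍ[ℝ]) + eps * inl b₁) f
        + aeval (((inl a : DualNumber ℍ[ℝ]) + eps * inl b₁) ^ 2) l * (eps * inl b₂) := by
  have hf' : f = k.comp (X ^ 2) + X * l.comp (X ^ 2) :=
    Polynomial.funext fun z => by simp [hf z, eval_comp]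
  exact aeval_add_of_mul_eq_neg_mul hf' (eps_mul_inl_anticomm hperp)
    (eps_mul_inl_mul_eps_mul_inl b₂ b₂)

theorem stmt_10 (f k l : ℝ[X])
    (hf : ∀ z : ℝ, f.eval z = k.eval (z ^ 2) + z * l.eval (z ^ 2))
    (a b₁ b₂ : ℍ[ℝ]) (ha : a.re = 0) (hb₁re : b₁.re = 0) (hb₂re : b₂.re = 0)
    (hpar : ∃ t : ℝ, b₁ = t • a) (hperp : b₂ * a = -(a * b₂)) :
    aeval ((inl a : DualNumber ℍ[ℝ]) + eps * inl b₁ + eps * inl b₂) f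
      = aeval ((inl a : DualNumber ℍ[ℝ]) + eps * inl b₁) f
        + aeval (((inl a : DualNumber ℍ[ℝ]) + eps * inl b₁) ^ 2) l * (eps * inl b₂) :=
  stmt_10_general f k l hf a b₁ b₂ hperp
end

section
/- Let A = a₀ + a₁ with a₀ real and a₁ a nonzero pure quaternion, and B = b₀ + b₁ + b₂ with b₀ real, b₁ parallel to a₁, b₂ perpendicular to a₁; write B₁ = b₀ + b₁. Then in the dual quaternions, exp(A + εB) = e^{a₀} ( (cos|a₁| + (sin|a₁|/|a₁|)·a₁)(1 + εB₁) + ε (sin|a₁|/|a₁|)·b₂ ). -/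
/-!
Choose `c` with `c a₁ - a₁ c = b₂`; it exists because `b₂` anticommutes with the pure quaternion
`a₁`, whose square is the nonzero real `-‖a₁‖²`. Since `ε² = 0`, conjugating by the dual unit
`1 + εc` turns `A + εB₁` into `A + ε(B₁ + b₂)`, and the exponential commutes with conjugation.
As `A` and `B₁` commute, `exp (A + εB₁) = exp A (1 + εB₁)`; conjugating back adds
`ε (c exp A - exp A c)`, which is `ε e^{a₀} (sin‖a₁‖/‖a₁‖) b₂` by the closed form of the quaternion
exponential.
-/

open Quaternion DualNumber TrivSqZeroExt NormedSpace

def Units.oneAddOfMulSelfEqZero {R : Type*} [Ring R] (n : R) (hn : n * n = 0) : Rˣ where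
  val := 1 + n
  inv := 1 - n
  val_inv := by rw [mul_sub, mul_one, add_mul, one_mul, hn, add_zero, add_sub_cancel_right]
  inv_val := by rw [sub_mul, one_mul, mul_add, mul_one, hn, add_zero, add_sub_cancel_right]

theorem NormedSpace.exp_one_add_mul_mul_one_sub_of_mul_self_eq_zero {𝔸 : Type*} [NormedRing 𝔸]
    [NormedAlgebra ℚ 𝔸] [CompleteSpace 𝔸] {n : 𝔸} (hn : n * n = 0) (x : 𝔸) :
    exp ((1 + n) * x * (1 - n)) = (1 + n) * exp x * (1 - n) :=
  exp_units_conj (Units.oneAddOfMulSelfEqZero n hn) x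

namespace DualNumber

variable {R : Type*}

theorem eps_mul_inl [Semiring R] (x : R) : (ε * inl x : R[ε]) = inr x := by
  ext <;> simp

theorem one_add_inr_mul_mul_one_sub_inr [Ring R] (c a b : R) :
    (1 + inr c) * (inl a + inr b) * (1 - inr c) = (inl a + inr (b + (c * a - a * c)) : R[ε]) := by
  ext
  · simp
  · simp only [snd_mul, fst_mul, fst_add, snd_add, fst_sub, snd_sub, fst_inl, snd_inl, fst_inr,
      snd_inr, fst_one, snd_one]
    noncomm_ring

theorem exp_inl_add_inr_of_commute [Ring R] [Algebra ℚ R] [TopologicalSpace R]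
    [IsTopologicalRing R] [T2Space R] {a b : R} (h : Commute a b) :
    exp (inl a + inr b : R[ε]) = inl (exp a) + inr (exp a * b) := by
  rw [TrivSqZeroExt.exp_def_of_smul_comm]
  · simp
  · simpa using h.symm.eq

end DualNumber

namespace Quaternion

theorem mul_self_eq_neg_sq_norm_of_re_eq_zero {a : ℍ[ℝ]} (ha : a.re = 0) :
    a * a = -((‖a‖ ^ 2 : ℝ) : ℍ[ℝ]) := by
  rw [← sq, sq_eq_neg_normSq.mpr ha, normSq_eq_norm_mul_self, sq]

theorem exists_mul_sub_mul_eq_of_anticommute {a b : ℍ[ℝ]} (ha : a.re = 0) (ha₀ : a ≠ 0)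
    (hab : b * a = -(a * b)) : ∃ c : ℍ[ℝ], c * a - a * c = b := by
  have hn : ‖a‖ ^ 2 ≠ 0 := by positivity
  refine ⟨-(2 * ‖a‖ ^ 2)⁻¹ • (b * a), ?_⟩
  have hbaa : b * a * a = -(‖a‖ ^ 2 • b) := by
    rw [mul_assoc, mul_self_eq_neg_sq_norm_of_re_eq_zero ha, mul_neg, mul_coe_eq_smul]
  have haba : a * (b * a) = ‖a‖ ^ 2 • b := by
    rw [hab, mul_neg, ← mul_assoc, mul_self_eq_neg_sq_norm_of_re_eq_zero ha, neg_mul, neg_neg,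
      coe_mul_eq_smul]
  rw [smul_mul_assoc, mul_smul_comm, hbaa, haba]
  match_scalars
  field_simp
  ring

theorem mul_exp_sub_exp_mul (c q : ℍ[ℝ]) :
    c * exp q - exp q * c =
      (Real.exp q.re * (Real.sin ‖q.im‖ / ‖q.im‖)) • (c * q.im - q.im * c) := by
  rw [exp_eq, mul_smul_comm, smul_mul_assoc, ← smul_sub, mul_add, add_mul, mul_smul_comm,
    smul_mul_assoc, (coe_commute _ c).eq, add_sub_add_left_eq_sub, ← smul_sub, smul_smul,
    ← Real.exp_eq_exp_ℝ]

end Quaternion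

theorem stmt_12_general (a₀ b₀ : ℝ) (a₁ b₁ b₂ : ℍ[ℝ])
    (ha₁ : a₁.re = 0) (ha₁ne : a₁ ≠ 0)
    (hpar : ∃ t : ℝ, b₁ = t • a₁) (hperp : b₂ * a₁ = -(a₁ * b₂)) :
    NormedSpace.exp ((inl ((a₀ : ℍ[ℝ]) + a₁) : DualNumber ℍ[ℝ]) + eps * inl ((b₀ : ℍ[ℝ]) + b₁ + b₂))
      = Real.exp a₀ •
        ((inl ((Real.cos ‖a₁‖ : ℍ[ℝ]) + (Real.sin ‖a₁‖ / ‖a₁‖) • a₁) : DualNumber ℍ[ℝ]) *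
            (1 + eps * inl ((b₀ : ℍ[ℝ]) + b₁))
          + eps * inl ((Real.sin ‖a₁‖ / ‖a₁‖) • b₂)) := by
  obtain ⟨t, rfl⟩ := hpar
  obtain ⟨c, hc⟩ := exists_mul_sub_mul_eq_of_anticommute ha₁ ha₁ne hperp
  set A : ℍ[ℝ] := a₀ + a₁
  set B₁ : ℍ[ℝ] := b₀ + t • a₁
  have hA_re : A.re = a₀ := by simp [A, ha₁]
  have hA_im : A.im = a₁ := by ext <;> simp [A, ha₁]
  have hcA : c * A - A * c = b₂ := by
    rw [← hc, mul_add, add_mul, (coe_commute a₀ c).eq, add_sub_add_left_eq_sub]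
  have hAB₁ : Commute A B₁ :=
    (coe_commute _ _).add_left ((coe_commute _ _).symm.add_right ((Commute.refl a₁).smul_right t))
  have hconj : inl A + ε * inl (B₁ + b₂) = (1 + inr c) * (inl A + inr B₁) * (1 - inr c) := by
    rw [one_add_inr_mul_mul_one_sub_inr, hcA, eps_mul_inl]
  have hc_sq : (inr c * inr c : DualNumber ℍ[ℝ]) = 0 := inr_mul_inr _ _ _
  let _ : NormedAlgebra ℚ (DualNumber ℍ[ℝ]) := NormedAlgebra.restrictScalars ℚ ℝ _
  calc exp (inl A + ε * inl (B₁ + b₂))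
      = (1 + inr c) * exp (inl A + inr B₁) * (1 - inr c) := by
        rw [hconj, exp_one_add_mul_mul_one_sub_of_mul_self_eq_zero hc_sq]
    _ = inl (exp A) + inr (exp A * B₁ + (c * exp A - exp A * c)) := by
        rw [exp_inl_add_inr_of_commute hAB₁, one_add_inr_mul_mul_one_sub_inr]
    _ = _ := by
        rw [mul_exp_sub_exp_mul, exp_eq, hA_re, hA_im, hc, eps_mul_inl, eps_mul_inl,
          ← Real.exp_eq_exp_ℝ]
        refine TrivSqZeroExt.ext ?_ ?_ <;> simp [smul_add, add_mul, smul_smul]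

theorem stmt_12 (a₀ b₀ : ℝ) (a₁ b₁ b₂ : ℍ[ℝ])
    (ha₁ : a₁.re = 0) (ha₁ne : a₁ ≠ 0) (hb₁re : b₁.re = 0) (hb₂re : b₂.re = 0)
    (hpar : ∃ t : ℝ, b₁ = t • a₁) (hperp : b₂ * a₁ = -(a₁ * b₂)) :
    NormedSpace.exp ((inl ((a₀ : ℍ[ℝ]) + a₁) : DualNumber ℍ[ℝ]) + eps * inl ((b₀ : ℍ[ℝ]) + b₁ + b₂))
      = Real.exp a₀ •
        ((inl ((Real.cos ‖a₁‖ : ℍ[ℝ]) + (Real.sin ‖a₁‖ / ‖a₁‖) • a₁) : DualNumber ℍ[ℝ]) *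
            (1 + eps * inl ((b₀ : ℍ[ℝ]) + b₁))
          + eps * inl ((Real.sin ‖a₁‖ / ‖a₁‖) • b₂)) :=
  stmt_12_general a₀ b₀ a₁ b₁ b₂ ha₁ ha₁ne hpar hperp
end
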